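/- arXiv:1801.08469 — 3 statements merged into one kernel-verified Lean document; each statement's English description precedes it below -/
import Mathlib

section
/- For every y, z, t > 0, the convolution integral ∫₀ᵗ (y·exp(−y²/(2u))/√(2πu³)) · (z·exp(−z²/(2(t−u)))/√(2π(t−u)³)) du equals (y+z)·exp(−(y+z)²/(2t))/√(2πt³). -/
/-!
With `N x = ∫₀ˣ exp (-s² / 2) ds` and `α v, γ v = (z v ∓ y (t - v)) / √(t v (t - v))`, the
convolution has the antiderivative
`F v = ((y + z) e^{-(y+z)²/2t} N (α v) + (y - z) e^{-(y-z)²/2t} N (γ v)) / (2π t^{3/2})`.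
Completing the square, `(y + z)² / 2t + α² / 2` and `(y - z)² / 2t + γ² / 2` both equal
`y² / 2v + z² / 2(t - v)`, so both Gaussian factors of `F'` are the exponential factor of the
integrand, and the rational factors combine to `y z t³ / (t v (t - v))^{3/2}`.
As `v → 0⁺`, `α → -∞` and `γ → +∞`; as `v → t⁻`, both tend to `+∞`. Since `N (±∞) = ±√(2π) / 2`,
only the first term survives in `F (t⁻) - F (0⁺)`.
-/

open Real MeasureTheory Filter Set Topology intervalIntegral

lemma sqrt_mul_pow_three (c : ℝ) {u : ℝ} (hu : 0 ≤ u) : √(c * u ^ 3) = √c * √u ^ 3 := by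
  conv_lhs => rw [← sq_sqrt hu, ← pow_mul, mul_comm 2, pow_mul, sqrt_mul' _ (by positivity),
    sqrt_sq (by positivity)]

noncomputable def gaussPrimitive (x : ℝ) : ℝ := ∫ s in (0 : ℝ)..x, exp (-s ^ 2 / 2)

lemma integrable_exp_neg_sq_div_two : Integrable fun s : ℝ => exp (-s ^ 2 / 2) := by
  simpa [div_eq_inv_mul, neg_mul] using integrable_exp_neg_mul_sq (b := 1 / 2) (by norm_num)

lemma hasDerivAt_gaussPrimitive (x : ℝ) : HasDerivAt gaussPrimitive (exp (-x ^ 2 / 2)) x :=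
  integral_hasDerivAt_right integrable_exp_neg_sq_div_two.intervalIntegrable
    integrable_exp_neg_sq_div_two.aestronglyMeasurable.stronglyMeasurableAtFilter
    (by fun_prop)

lemma tendsto_gaussPrimitive_atTop : Tendsto gaussPrimitive atTop (𝓝 (√(2 * π) / 2)) := by
  have hI : ∫ s in Ioi 0, exp (-s ^ 2 / 2) = √(2 * π) / 2 := by
    have := integral_gaussian_Ioi (1 / 2)
    norm_num [div_eq_inv_mul, neg_mul] at this ⊢
    rw [this]
  rw [← hI]
  exact intervalIntegral_tendsto_integral_Ioi 0 integrable_exp_neg_sq_div_two.integrableOn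
    tendsto_id

lemma gaussPrimitive_neg (x : ℝ) : gaussPrimitive (-x) = -gaussPrimitive x := by
  have h := integral_comp_neg (a := 0) (b := -x) fun s => exp (-s ^ 2 / 2)
  simp only [neg_sq, neg_neg, neg_zero] at h
  rw [gaussPrimitive, h, integral_symm, gaussPrimitive]

lemma tendsto_gaussPrimitive_atBot : Tendsto gaussPrimitive atBot (𝓝 (-(√(2 * π) / 2))) := by
  have h := (tendsto_gaussPrimitive_atTop.comp tendsto_neg_atBot_atTop).neg
  simpa [Function.comp_def, gaussPrimitive_neg] using h

-- At `u = 0` the junk value `0` (division by `√0`) makes `levyDensity a` continuous on `[0, ∞)`.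
noncomputable def levyDensity (a u : ℝ) : ℝ := a * exp (-(a ^ 2) / (2 * u)) / √(2 * π * u ^ 3)

lemma tendsto_levyDensity_nhdsGT_zero (a : ℝ) : Tendsto (levyDensity a) (𝓝[>] 0) (𝓝 0) := by
  rcases eq_or_ne a 0 with rfl | ha
  · exact tendsto_const_nhds.congr fun u => by simp [levyDensity]
  have h := ((tendsto_rpow_mul_exp_neg_mul_atTop_nhds_zero (3 / 2) (a ^ 2 / 2)
    (by positivity)).comp tendsto_inv_nhdsGT_zero).const_mul (a / √(2 * π))
  rw [mul_zero] at h
  refine h.congr' ?_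
  filter_upwards [self_mem_nhdsWithin] with u (hu : 0 < u)
  have hpow : u⁻¹ ^ (3 / 2 : ℝ) = (√u ^ 3)⁻¹ := by
    rw [inv_rpow hu.le, sqrt_eq_rpow, ← rpow_natCast, ← rpow_mul hu.le]
    norm_num
  simp only [Function.comp_apply, levyDensity, hpow, sqrt_mul_pow_three _ hu.le]
  field_simp

lemma continuousOn_levyDensity (a : ℝ) : ContinuousOn (levyDensity a) (Ici 0) := by
  intro u hu
  rcases (mem_Ici.1 hu).eq_or_lt with rfl | hu
  · rw [← continuousWithinAt_Ioi_iff_Ici, ContinuousWithinAt]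
    simpa [levyDensity] using tendsto_levyDensity_nhdsGT_zero a
  · refine ContinuousAt.continuousWithinAt ?_
    unfold levyDensity
    fun_prop (disch := positivity)

lemma intervalIntegrable_levyDensity_mul {t : ℝ} (ht : 0 ≤ t) (y z : ℝ) :
    IntervalIntegrable (fun u => levyDensity y u * levyDensity z (t - u)) volume 0 t := by
  refine ContinuousOn.intervalIntegrable ?_
  rw [uIcc_of_le ht]
  exact ((continuousOn_levyDensity y).mono fun u hu => hu.1).mul <|
    (continuousOn_levyDensity z).comp (by fun_prop) fun u hu => sub_nonneg.2 hu.2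

noncomputable def levyArg (t p q v : ℝ) : ℝ := (p * v - q * (t - v)) / √(t * v * (t - v))

section levyArg

variable {t p q u : ℝ}

lemma tendsto_sqrt_mul_mul_sub_nhdsGT_zero (ht : 0 < t) :
    Tendsto (fun v => √(t * v * (t - v))) (𝓝[>] 0) (𝓝[>] 0) := by
  refine tendsto_nhdsWithin_iff.2 ⟨?_, ?_⟩
  · exact ((by fun_prop : Continuous fun v => √(t * v * (t - v))).tendsto' 0 0
      (by simp)).mono_left nhdsWithin_le_nhds
  · filter_upwards [Ioo_mem_nhdsGT ht] with v hv
    exact sqrt_pos.2 (mul_pos (mul_pos ht hv.1) (sub_pos.2 hv.2))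

lemma tendsto_sqrt_mul_mul_sub_nhdsLT (ht : 0 < t) :
    Tendsto (fun v => √(t * v * (t - v))) (𝓝[<] t) (𝓝[>] 0) := by
  refine tendsto_nhdsWithin_iff.2 ⟨?_, ?_⟩
  · exact ((by fun_prop : Continuous fun v => √(t * v * (t - v))).tendsto' t 0
      (by simp)).mono_left nhdsWithin_le_nhds
  · filter_upwards [Ioo_mem_nhdsLT ht] with v hv
    exact sqrt_pos.2 (mul_pos (mul_pos ht hv.1) (sub_pos.2 hv.2))

lemma tendsto_levyArg_nhdsGT_zero_atBot (ht : 0 < t) (hq : 0 < q) :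
    Tendsto (levyArg t p q) (𝓝[>] 0) atBot := by
  unfold levyArg
  simp only [div_eq_mul_inv]
  refine Tendsto.neg_mul_atTop (by nlinarith : -(q * t) < 0) ?_
    (tendsto_inv_nhdsGT_zero.comp (tendsto_sqrt_mul_mul_sub_nhdsGT_zero ht))
  exact ((by fun_prop : Continuous fun v => p * v - q * (t - v)).tendsto' 0 _
    (by ring)).mono_left nhdsWithin_le_nhds

lemma tendsto_levyArg_nhdsGT_zero_atTop (ht : 0 < t) (hq : q < 0) :
    Tendsto (levyArg t p q) (𝓝[>] 0) atTop := by
  unfold levyArg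
  simp only [div_eq_mul_inv]
  refine Tendsto.pos_mul_atTop (by nlinarith : 0 < -(q * t)) ?_
    (tendsto_inv_nhdsGT_zero.comp (tendsto_sqrt_mul_mul_sub_nhdsGT_zero ht))
  exact ((by fun_prop : Continuous fun v => p * v - q * (t - v)).tendsto' 0 _
    (by ring)).mono_left nhdsWithin_le_nhds

lemma tendsto_levyArg_nhdsLT_atTop (ht : 0 < t) (hp : 0 < p) :
    Tendsto (levyArg t p q) (𝓝[<] t) atTop := by
  unfold levyArg
  simp only [div_eq_mul_inv]
  refine Tendsto.pos_mul_atTop (by nlinarith : 0 < p * t) ?_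
    (tendsto_inv_nhdsGT_zero.comp (tendsto_sqrt_mul_mul_sub_nhdsLT ht))
  exact ((by fun_prop : Continuous fun v => p * v - q * (t - v)).tendsto' t _
    (by ring)).mono_left nhdsWithin_le_nhds

lemma hasDerivAt_levyArg (hu : 0 < u) (hut : u < t) :
    HasDerivAt (levyArg t p q)
      (t ^ 2 * (p * u + q * (t - u)) / (2 * √(t * u * (t - u)) ^ 3)) u := by
  have hs : 0 < t * u * (t - u) := mul_pos (mul_pos (hu.trans hut) hu) (sub_pos.2 hut)
  have hnum : HasDerivAt (fun v => p * v - q * (t - v)) (p + q) u :=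
    (((hasDerivAt_id' u).const_mul p).fun_sub
      (((hasDerivAt_id' u).const_sub t).const_mul q)).congr_deriv (by ring)
  have hden : HasDerivAt (fun v => t * v * (t - v)) (t * (t - u) - t * u) u :=
    (((hasDerivAt_id' u).const_mul t).fun_mul ((hasDerivAt_id' u).const_sub t)).congr_deriv
      (by ring)
  refine (hnum.div (hden.sqrt hs.ne') (sqrt_pos.2 hs).ne').congr_deriv ?_
  field_simp
  rw [sq_sqrt hs.le]
  ring

lemma add_sq_div_add_levyArg_sq_div_two (hu : 0 < u) (hut : u < t) :
    (p + q) ^ 2 / (2 * t) + levyArg t p q u ^ 2 / 2 = q ^ 2 / (2 * u) + p ^ 2 / (2 * (t - u)) := by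
  have hs : 0 < t * u * (t - u) := mul_pos (mul_pos (hu.trans hut) hu) (sub_pos.2 hut)
  have ht : t ≠ 0 := (hu.trans hut).ne'
  have htu : t - u ≠ 0 := (sub_pos.2 hut).ne'
  rw [levyArg, div_pow, sq_sqrt hs.le]
  field_simp
  ring

lemma hasDerivAt_exp_mul_gaussPrimitive_levyArg (hu : 0 < u) (hut : u < t) :
    HasDerivAt (fun v => exp (-(p + q) ^ 2 / (2 * t)) * gaussPrimitive (levyArg t p q v))
      (exp (-(q ^ 2 / (2 * u) + p ^ 2 / (2 * (t - u)))) *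
        (t ^ 2 * (p * u + q * (t - u)) / (2 * √(t * u * (t - u)) ^ 3))) u := by
  refine (((hasDerivAt_gaussPrimitive _).comp u (hasDerivAt_levyArg hu hut)).const_mul _
    ).congr_deriv ?_
  rw [← mul_assoc, ← exp_add, ← add_sq_div_add_levyArg_sq_div_two (p := p) (q := q) hu hut]
  ring_nf

end levyArg

noncomputable def levyConvPrimitive (y z t v : ℝ) : ℝ :=
  ((y + z) * exp (-(y + z) ^ 2 / (2 * t)) * gaussPrimitive (levyArg t z y v) +
    (y - z) * exp (-(y - z) ^ 2 / (2 * t)) * gaussPrimitive (levyArg t z (-y) v)) /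
      (2 * π * √t ^ 3)

section levyConvPrimitive

variable {y z t u : ℝ}

lemma levyDensity_mul_levyDensity_sub (hu : 0 < u) (hut : u < t) :
    levyDensity y u * levyDensity z (t - u) =
      y * z * exp (-(y ^ 2 / (2 * u) + z ^ 2 / (2 * (t - u)))) * t ^ 3 /
        (2 * π * √t ^ 3 * √(t * u * (t - u)) ^ 3) := by
  have ht := hu.trans hut
  have htu := sub_pos.2 hut
  rw [levyDensity, levyDensity, sqrt_mul_pow_three _ hu.le, sqrt_mul_pow_three _ htu.le,
    sqrt_mul (x := t * u) (by positivity), sqrt_mul ht.le, neg_add, exp_add]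
  field_simp
  rw [sq_sqrt (by positivity), show √t ^ 6 = (√t ^ 2) ^ 3 by ring, sq_sqrt ht.le]
  ring

lemma hasDerivAt_levyConvPrimitive (hu : 0 < u) (hut : u < t) :
    HasDerivAt (levyConvPrimitive y z t) (levyDensity y u * levyDensity z (t - u)) u := by
  have hα := (hasDerivAt_exp_mul_gaussPrimitive_levyArg (p := z) (q := y) hu hut).const_mul (y + z)
  have hγ := (hasDerivAt_exp_mul_gaussPrimitive_levyArg (p := z) (q := -y) hu hut).const_mul (y - z)
  refine (((hα.fun_add hγ).div_const (2 * π * √t ^ 3)).congr_of_eventuallyEq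
    (.of_forall fun v => ?_)).congr_deriv ?_
  · simp only [levyConvPrimitive]
    ring_nf
  · rw [levyDensity_mul_levyDensity_sub hu hut, neg_sq]
    ring

lemma tendsto_levyConvPrimitive_nhdsGT_zero (hy : 0 < y) (ht : 0 < t) :
    Tendsto (levyConvPrimitive y z t) (𝓝[>] 0)
      (𝓝 (((y + z) * exp (-(y + z) ^ 2 / (2 * t)) * -(√(2 * π) / 2) +
        (y - z) * exp (-(y - z) ^ 2 / (2 * t)) * (√(2 * π) / 2)) / (2 * π * √t ^ 3))) :=
  (((tendsto_gaussPrimitive_atBot.comp (tendsto_levyArg_nhdsGT_zero_atBot ht hy)).const_mul _).add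
    ((tendsto_gaussPrimitive_atTop.comp
      (tendsto_levyArg_nhdsGT_zero_atTop ht (neg_neg_of_pos hy))).const_mul _)).div_const _

lemma tendsto_levyConvPrimitive_nhdsLT (hz : 0 < z) (ht : 0 < t) :
    Tendsto (levyConvPrimitive y z t) (𝓝[<] t)
      (𝓝 (((y + z) * exp (-(y + z) ^ 2 / (2 * t)) * (√(2 * π) / 2) +
        (y - z) * exp (-(y - z) ^ 2 / (2 * t)) * (√(2 * π) / 2)) / (2 * π * √t ^ 3))) :=
  (((tendsto_gaussPrimitive_atTop.comp (tendsto_levyArg_nhdsLT_atTop ht hz)).const_mul _).add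
    ((tendsto_gaussPrimitive_atTop.comp (tendsto_levyArg_nhdsLT_atTop ht hz)).const_mul _)
    ).div_const _

end levyConvPrimitive

/-- Convolution identity for Lévy (inverse Gaussian first-passage) densities. -/
theorem levy_density_convolution (y z t : ℝ) (hy : 0 < y) (hz : 0 < z) (ht : 0 < t) :
    ∫ u in (0:ℝ)..t,
      (y * Real.exp (-(y ^ 2) / (2 * u)) / Real.sqrt (2 * π * u ^ 3)) *
        (z * Real.exp (-(z ^ 2) / (2 * (t - u))) / Real.sqrt (2 * π * (t - u) ^ 3)) =
      (y + z) * Real.exp (-((y + z) ^ 2) / (2 * t)) / Real.sqrt (2 * π * t ^ 3) := by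
  refine (integral_eq_sub_of_hasDerivAt_of_tendsto ht
    (fun u hu => hasDerivAt_levyConvPrimitive hu.1 hu.2)
    (intervalIntegrable_levyDensity_mul ht.le y z)
    (tendsto_levyConvPrimitive_nhdsGT_zero hy ht) (tendsto_levyConvPrimitive_nhdsLT hz ht)).trans ?_
  rw [sqrt_mul_pow_three _ ht.le]
  field_simp
  rw [sq_sqrt (by positivity)]
  ring
end

section
/- For every y, t > 0, ∫₀ᵗ (y·exp(−y²/(2u))/√(2πu³)) · (1/√(2π(t−u))) du = exp(−y²/(2t))/√(2πt). -/
open Real Filter Set Topology MeasureTheory intervalIntegral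

/-!
Write `p = exp (-y²/(2t)) / √(2πt)` for the right-hand side, `Φ₀ x = ∫₀ˣ exp (-r²/2) / √(2π) dr`
and `s u = y √(1/u - 1/t)`. Since `exp (-s²/2) = exp (-y²/(2u)) / exp (-y²/(2t))`, the chain rule
shows that the integrand is the derivative of `-2p Φ₀(s u)` on `(0, t)`. As `u` runs from `0` to `t`,
`s u` decreases from `+∞` to `0`, so the integral is `0 - (-2p · 1/2) = p`; the integrand is
nonnegative, so its integrability comes for free.
-/

theorem intervalIntegrable_deriv_of_nonneg_of_tendsto {f f' : ℝ → ℝ} {a b fa fb : ℝ}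
    (hab : a < b)
    (hderiv : ∀ x ∈ Ioo a b, HasDerivAt f (f' x) x) (hf' : ∀ x ∈ Ioo a b, 0 ≤ f' x)
    (ha : Tendsto f (𝓝[>] a) (𝓝 fa)) (hb : Tendsto f (𝓝[<] b) (𝓝 fb)) :
    IntervalIntegrable f' volume a b := by
  classical
  set F : ℝ → ℝ := Function.update (Function.update f a fa) b fb
  have hFf : EqOn F f (Ioo a b) := fun x hx => by
    simp only [F, Function.update_of_ne hx.2.ne, Function.update_of_ne hx.1.ne']
  have hFderiv : ∀ x ∈ Ioo a b, HasDerivAt F (f' x) x := fun x hx =>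
    (hderiv x hx).congr_of_eventuallyEq (eventuallyEq_of_mem (Ioo_mem_nhds hx.1 hx.2) hFf)
  have hcont : ContinuousOn F (Icc a b) := by
    rw [continuousOn_update_iff, continuousOn_update_iff, Icc_sdiff_right, Ico_sdiff_left]
    refine ⟨⟨fun z hz => (hderiv z hz).continuousAt.continuousWithinAt, fun _ => ?_⟩, fun _ => ?_⟩
    · exact ha.mono_left (nhdsWithin_mono _ Ioo_subset_Ioi_self)
    · refine (hb.congr' ?_).mono_left (nhdsWithin_mono _ Ico_subset_Iio_self)
      filter_upwards [Ioo_mem_nhdsLT hab] with z hz using (Function.update_of_ne hz.1.ne' _ _).symm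
  refine intervalIntegrable_deriv_of_nonneg (g := F) ?_ ?_ ?_ <;>
    simpa only [uIcc_of_le hab.le, min_eq_left hab.le, max_eq_right hab.le]

noncomputable def stdGaussianIntegral (x : ℝ) : ℝ := ∫ r in (0 : ℝ)..x, exp (-r ^ 2 / 2) / √(2 * π)

lemma continuous_stdGaussianDensity : Continuous fun r : ℝ => exp (-r ^ 2 / 2) / √(2 * π) := by
  fun_prop

lemma hasDerivAt_stdGaussianIntegral (x : ℝ) :
    HasDerivAt stdGaussianIntegral (exp (-x ^ 2 / 2) / √(2 * π)) x :=
  continuous_stdGaussianDensity.integral_hasStrictDerivAt 0 x |>.hasDerivAt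

lemma integral_stdGaussianDensity_Ioi :
    ∫ r in Ioi (0 : ℝ), exp (-r ^ 2 / 2) / √(2 * π) = 1 / 2 := by
  have h (r : ℝ) : -r ^ 2 / 2 = -(1 / 2) * r ^ 2 := by ring
  simp_rw [h, MeasureTheory.integral_div, integral_gaussian_Ioi,
    show π / (1 / 2) = 2 * π by ring]
  field_simp

lemma tendsto_stdGaussianIntegral_atTop :
    Tendsto stdGaussianIntegral atTop (𝓝 (1 / 2)) := by
  have hint : IntegrableOn (fun r : ℝ => exp (-r ^ 2 / 2) / √(2 * π)) (Ioi 0) := by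
    simp_rw [neg_div, div_eq_inv_mul _ (2 : ℝ), ← neg_mul]
    exact ((integrable_exp_neg_mul_sq (by norm_num)).div_const _).integrableOn
  have h := intervalIntegral_tendsto_integral_Ioi 0 hint tendsto_id
  rwa [integral_stdGaussianDensity_Ioi] at h

noncomputable def levyHeatPrimitive (y t u : ℝ) : ℝ :=
  -(2 * (exp (-y ^ 2 / (2 * t)) / √(2 * π * t))) * stdGaussianIntegral (y * √(u⁻¹ - t⁻¹))

lemma hasDerivAt_levyHeatPrimitive (y : ℝ) {t u : ℝ} (hu : 0 < u) (hut : u < t) :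
    HasDerivAt (levyHeatPrimitive y t)
      (y * exp (-y ^ 2 / (2 * u)) / √(2 * π * u ^ 3) * (1 / √(2 * π * (t - u)))) u := by
  have ht : 0 < t := hu.trans hut
  have hq : 0 < u⁻¹ - t⁻¹ := sub_pos.2 (inv_strictAnti₀ hu hut)
  have hs : HasDerivAt (fun u => y * √(u⁻¹ - t⁻¹)) (y * (-(u ^ 2)⁻¹ / (2 * √(u⁻¹ - t⁻¹)))) u :=
    (((hasDerivAt_inv hu.ne').sub_const t⁻¹).sqrt hq.ne').const_mul y
  refine (((hasDerivAt_stdGaussianIntegral _).comp u hs).const_mul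
    (-(2 * (exp (-y ^ 2 / (2 * t)) / √(2 * π * t))))).congr_deriv ?_
  have hexp : exp (-y ^ 2 / (2 * u)) =
      exp (-y ^ 2 / (2 * t)) * exp (-(y * √(u⁻¹ - t⁻¹)) ^ 2 / 2) := by
    rw [← exp_add, mul_pow, sq_sqrt hq.le]
    congr 1
    field_simp
    ring
  have hroots : √(2 * π * u ^ 3) * √(2 * π * (t - u)) =
      √(2 * π * t) * √(2 * π) * (u ^ 2 * √(u⁻¹ - t⁻¹)) := by
    rw [← sqrt_mul (by positivity), ← sqrt_mul (by positivity), ← sqrt_sq (sq_nonneg u),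
      ← sqrt_mul (by positivity), ← sqrt_mul (by positivity)]
    congr 1
    field_simp
  rw [hexp, mul_one_div, div_div, mul_assoc, hroots]
  field_simp

lemma tendsto_levyHeatPrimitive_nhdsGT_zero {y : ℝ} (hy : 0 < y) (t : ℝ) :
    Tendsto (levyHeatPrimitive y t) (𝓝[>] 0) (𝓝 (-(exp (-y ^ 2 / (2 * t)) / √(2 * π * t)))) := by
  have hs : Tendsto (fun u : ℝ => y * √(u⁻¹ - t⁻¹)) (𝓝[>] 0) atTop :=
    (tendsto_sqrt_atTop.comp
      (tendsto_atTop_add_const_right _ _ tendsto_inv_nhdsGT_zero)).const_mul_atTop hy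
  have h := (tendsto_stdGaussianIntegral_atTop.comp hs).const_mul
    (-(2 * (exp (-y ^ 2 / (2 * t)) / √(2 * π * t))))
  rwa [show -(2 * (exp (-y ^ 2 / (2 * t)) / √(2 * π * t))) * (1 / 2)
    = -(exp (-y ^ 2 / (2 * t)) / √(2 * π * t)) by ring] at h

lemma continuousAt_levyHeatPrimitive (y t : ℝ) {u : ℝ} (hu : u ≠ 0) :
    ContinuousAt (levyHeatPrimitive y t) u :=
  continuousAt_const.mul <| (hasDerivAt_stdGaussianIntegral _).continuousAt.comp <|
    continuousAt_const.mul <| ((continuousAt_inv₀ hu).sub continuousAt_const).sqrt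

lemma levyHeatPrimitive_self (y t : ℝ) : levyHeatPrimitive y t t = 0 := by
  simp [levyHeatPrimitive, stdGaussianIntegral]

/-- The `z = 0` case of the convolution of the Lévy first-passage density with the heat kernel. -/
theorem levy_heatKernel_convolution_zero (y t : ℝ) (hy : 0 < y) (ht : 0 < t) :
    ∫ u in (0:ℝ)..t,
      (y * Real.exp (-(y ^ 2) / (2 * u)) / Real.sqrt (2 * π * u ^ 3)) *
        (1 / Real.sqrt (2 * π * (t - u))) =
      Real.exp (-(y ^ 2) / (2 * t)) / Real.sqrt (2 * π * t) := by
  have hderiv (u : ℝ) (hu : u ∈ Ioo 0 t) := hasDerivAt_levyHeatPrimitive y hu.1 hu.2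
  have hnonneg (u : ℝ) (hu : u ∈ Ioo 0 t) :
      0 ≤ y * exp (-y ^ 2 / (2 * u)) / √(2 * π * u ^ 3) * (1 / √(2 * π * (t - u))) := by
    have hu0 := hu.1
    positivity
  have h0 := tendsto_levyHeatPrimitive_nhdsGT_zero hy t
  have ht' : Tendsto (levyHeatPrimitive y t) (𝓝[<] t) (𝓝 0) := by
    simpa only [levyHeatPrimitive_self] using
      (continuousAt_levyHeatPrimitive y t ht.ne').tendsto.mono_left nhdsWithin_le_nhds
  rw [integral_eq_sub_of_hasDerivAt_of_tendsto ht hderiv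
    (intervalIntegrable_deriv_of_nonneg_of_tendsto ht hderiv hnonneg h0 ht') h0 ht', zero_sub,
    neg_neg]
end

section
/- Let S be a random walk on ℤ with i.i.d. increments, τ_a := min{n ≥ 1 : S_n = a}, Λᵃ_n := #{1 ≤ k ≤ n : S_k = a}, and let Ω_u denote the sum of u i.i.d. copies of τ_0. Then for a = 0 and x ∈ ℤ with x ≠ 0, for every ℓ ≥ 1 and n ∈ ℕ: ℙ[S_n = x, Λ⁰_n = ℓ] = Σ_{m=1}^{n} ℙ[Ω_ℓ = m]·ℙ[τ_x = n − m]. -/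
open MeasureTheory ProbabilityTheory

/-- The random walk `S_n = X_1 + ⋯ + X_n`. -/
def S {Ω : Type*} (X : ℕ → Ω → ℤ) (n : ℕ) (ω : Ω) : ℤ :=
  ∑ i ∈ Finset.range n, X (i + 1) ω

/-- The first hitting time `τ_a := min {n ≥ 1 : S_n = a}` (with value `⊤` if the walk
never hits `a`). -/
noncomputable def tau {Ω : Type*} (X : ℕ → Ω → ℤ) (a : ℤ) (ω : Ω) : ℕ∞ :=
  sInf {n : ℕ∞ | ∃ m : ℕ, n = m ∧ 1 ≤ m ∧ S X m ω = a}

/-- The occupation measure `Λᵃ_n := #{1 ≤ k ≤ n : S_k = a}`. -/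
def occ {Ω : Type*} (X : ℕ → Ω → ℤ) (a : ℤ) (n : ℕ) (ω : Ω) : ℕ :=
  ((Finset.Icc 1 n).filter fun k => S X k ω = a).card

/-- `Ω_u := ω_1 + ⋯ + ω_u`, the partial sums of i.i.d. copies of `τ_0`. -/
def Om {Ω : Type*} (w : ℕ → Ω → ℕ∞) (u : ℕ) (ω : Ω) : ℕ∞ :=
  ∑ i ∈ Finset.range u, w (i + 1) ω

/-!
Every event in the statement depends on finitely many i.i.d. steps, so its probability is the sum,
over the corresponding set of step lists, of the products of the one-step probabilities. On lists
the identity is combinatorial. Cutting a path with `ℓ ≥ 1` visits to `0` at its last visit to `0`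
writes it uniquely as a path from `0` to `0` with `ℓ` visits followed by a path to `x` avoiding `0`.
Reversing the second piece gives a path that first reaches `x` at its last step, because the
reversed partial sums are `x - S_{u-k}`: this is `ℙ[S_u = x, τ_0 > u] = ℙ[τ_x = u]`. Cutting the
first piece at its successive returns to `0` shows that its weight is the `ℓ`-fold convolution of
the law of `τ_0`, i.e. the law of `Ω_ℓ`.
-/

open scoped ENNReal

noncomputable def listWeight {α : Type*} (p : α → ℝ≥0∞) (A : Set (List α)) : ℝ≥0∞ :=
  ∑' l : A, (l.1.map p).prod

section ListWeight

variable {α : Type*} (p : α → ℝ≥0∞)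

lemma listWeight_singleton (l : List α) : listWeight p {l} = (l.map p).prod :=
  tsum_singleton l fun l => (l.map p).prod

lemma listWeight_biUnion_finset {ι : Type*} {s : Finset ι} {t : ι → Set (List α)}
    (h : (s : Set ι).PairwiseDisjoint t) :
    listWeight p (⋃ i ∈ s, t i) = ∑ i ∈ s, listWeight p (t i) := by
  rw [listWeight, ← Finset.set_biUnion_coe, ENNReal.tsum_biUnion' (f := fun l => (l.map p).prod) h]
  exact Finset.tsum_subtype s fun i => listWeight p (t i)

lemma listWeight_image2_append {A B : Set (List α)} {k : ℕ} (hA : ∀ a ∈ A, a.length = k) :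
    listWeight p (Set.image2 (· ++ ·) A B) = listWeight p A * listWeight p B := by
  have hinj : Set.InjOn (Function.uncurry (· ++ ·)) (A ×ˢ B) := by
    rintro ⟨a, b⟩ ⟨ha, -⟩ ⟨a', b'⟩ ⟨ha', -⟩ h
    obtain ⟨rfl, rfl⟩ := List.append_inj h (by rw [hA a ha, hA a' ha'])
    rfl
  rw [listWeight, ← Set.image_uncurry_prod, tsum_image (fun l => (l.map p).prod) hinj,
    ← (Equiv.Set.prod A B).symm.tsum_eq, ENNReal.tsum_prod', listWeight, listWeight,
    ← ENNReal.tsum_mul_right]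
  refine tsum_congr fun a => ?_
  rw [← ENNReal.tsum_mul_left]
  refine tsum_congr fun b => ?_
  change ((a.1 ++ b.1).map p).prod = _
  rw [List.map_append, List.prod_append]

lemma listWeight_image_reverse (A : Set (List α)) :
    listWeight p (List.reverse '' A) = listWeight p A := by
  rw [listWeight, tsum_image (fun l => (l.map p).prod) List.reverse_injective.injOn, listWeight]
  simp [List.map_reverse, List.prod_reverse]

end ListWeight

section Trajectory

variable {Ω α : Type*}

def trajectory (Y : ℕ → Ω → α) (n : ℕ) (ω : Ω) : List α :=
  (List.range n).map fun i => Y (i + 1) ω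

@[simp] lemma length_trajectory (Y : ℕ → Ω → α) (n : ℕ) (ω : Ω) :
    (trajectory Y n ω).length = n := by
  simp [trajectory]

lemma take_trajectory (Y : ℕ → Ω → α) {k n : ℕ} (hk : k ≤ n) (ω : Ω) :
    (trajectory Y n ω).take k = trajectory Y k ω := by
  rw [trajectory, ← List.map_take, List.take_range, min_eq_left hk, trajectory]

lemma sum_trajectory [AddCommMonoid α] (Y : ℕ → Ω → α) (n : ℕ) (ω : Ω) :
    (trajectory Y n ω).sum = ∑ i ∈ Finset.range n, Y (i + 1) ω := by
  simp [trajectory, Finset.sum_eq_multiset_sum, Multiset.range]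

lemma trajectory_eq_iff (Y : ℕ → Ω → α) {n : ℕ} {l : List α} (hl : l.length = n) (ω : Ω) :
    trajectory Y n ω = l ↔ ∀ i ∈ Finset.range n, Y (i + 1) ω ∈ {z | l[i]? = some z} := by
  simp only [List.ext_getElem?_iff, trajectory, List.getElem?_map, Finset.mem_range,
    Set.mem_ofPred_eq]
  constructor
  · intro h i hi
    rw [← h i, List.getElem?_range hi, Option.map_some]
  · intro h i
    rcases lt_or_ge i n with hi | hi
    · rw [List.getElem?_range hi, Option.map_some, h i hi]
    · rw [List.getElem?_eq_none (by simpa using hi), List.getElem?_eq_none (by omega),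
        Option.map_none]

variable [MeasureSpace Ω] [Countable α] [MeasurableSpace α] [MeasurableSingletonClass α]
  {Y : ℕ → Ω → α} {Z : Ω → α}

lemma measure_trajectory_eq (hindep : iIndepFun Y ℙ) (hident : ∀ i, IdentDistrib (Y i) Z ℙ ℙ)
    {n : ℕ} {l : List α} (hl : l.length = n) :
    ℙ {ω | trajectory Y n ω = l} = (l.map fun z => ℙ (Z ⁻¹' {z})).prod := by
  have hset : {ω | trajectory Y n ω = l} =
      ⋂ i ∈ Finset.range n, Y (i + 1) ⁻¹' {z | l[i]? = some z} := by
    ext ω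
    simp only [Set.mem_ofPred_eq, Set.mem_iInter, Set.mem_preimage, trajectory_eq_iff Y hl]
  rw [hset, (hindep.precomp Nat.succ_injective).measure_inter_preimage_eq_mul _
    fun _ _ => .of_discrete, Finset.prod_range, ← hl, ← Fin.prod_univ_fun_getElem]
  refine Finset.prod_congr rfl fun i _ => ?_
  rw [← (hident (i + 1)).measure_mem_eq (measurableSet_singleton _)]
  congr 1
  ext ω
  simp

lemma measure_trajectory_mem (hindep : iIndepFun Y ℙ) (hident : ∀ i, IdentDistrib (Y i) Z ℙ ℙ)
    {n : ℕ} {A : Set (List α)} (hA : ∀ l ∈ A, l.length = n) :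
    ℙ {ω | trajectory Y n ω ∈ A} = listWeight (fun z => ℙ (Z ⁻¹' {z})) A := by
  have hunion : {ω | trajectory Y n ω ∈ A} = ⋃ l ∈ A, {ω | trajectory Y n ω = l} := by
    ext ω
    simp
  have hnull : ∀ l ∈ A, NullMeasurableSet {ω | trajectory Y n ω = l} ℙ := by
    intro l hl
    simp only [trajectory_eq_iff Y (hA l hl), Set.ofPred_forall]
    exact .biInter (Finset.range n).countable_toSet fun i _ =>
      (hident (i + 1)).aemeasurable_fst.nullMeasurable .of_discrete
  have hdisj : A.Pairwise (Function.onFun (AEDisjoint ℙ) fun l => {ω | trajectory Y n ω = l}) :=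
    fun _ _ _ _ hne =>
      Disjoint.aedisjoint <| Set.disjoint_left.2 fun _ h h' => hne (h.symm.trans h')
  rw [hunion, measure_biUnion₀ A.to_countable hdisj hnull, listWeight]
  exact tsum_congr fun l => measure_trajectory_eq hindep hident (hA l l.2)

end Trajectory

def zeroVisits (l : List ℤ) : ℕ :=
  ((Finset.Icc 1 l.length).filter fun k => (l.take k).sum = 0).card

@[simp] lemma zeroVisits_nil : zeroVisits [] = 0 := rfl

lemma zeroVisits_eq_zero_iff {l : List ℤ} :
    zeroVisits l = 0 ↔ ∀ k ∈ Finset.Icc 1 l.length, (l.take k).sum ≠ 0 := by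
  simp [zeroVisits, Finset.filter_eq_empty_iff]

lemma zeroVisits_concat (l : List ℤ) (z : ℤ) :
    zeroVisits (l ++ [z]) = zeroVisits l + if (l ++ [z]).sum = 0 then 1 else 0 := by
  have hIcc : Finset.Icc 1 (l ++ [z]).length = insert (l.length + 1) (Finset.Icc 1 l.length) := by
    ext k; simp; omega
  have htake : ∀ k ∈ Finset.Icc 1 l.length, ((l ++ [z]).take k).sum = (l.take k).sum :=
    fun k hk => by rw [List.take_append_of_le_length (Finset.mem_Icc.1 hk).2]
  rw [zeroVisits, hIcc, Finset.filter_insert, List.take_of_length_le (by simp),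
    Finset.filter_congr fun k hk => by rw [htake k hk]]
  split_ifs with h
  · rw [Finset.card_insert_of_notMem (by simp)]; rfl
  · rfl

lemma zeroVisits_append {a : List ℤ} (ha : a.sum = 0) (b : List ℤ) :
    zeroVisits (a ++ b) = zeroVisits a + zeroVisits b := by
  induction b using List.reverseRecOn with
  | nil => simp
  | append_singleton b z ih =>
    rw [← List.append_assoc, zeroVisits_concat, zeroVisits_concat, ih]
    simp [ha, add_assoc]

lemma exists_split_at_last_zero (l : List ℤ) :
    ∃ a b, l = a ++ b ∧ a.sum = 0 ∧ zeroVisits b = 0 := by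
  induction l using List.reverseRecOn with
  | nil => exact ⟨[], [], rfl, rfl, rfl⟩
  | append_singleton l z ih =>
    obtain ⟨a, b, rfl, ha, hb⟩ := ih
    by_cases h : (a ++ b ++ [z]).sum = 0
    · exact ⟨a ++ b ++ [z], [], by simp, h, rfl⟩
    · refine ⟨a, b ++ [z], by simp, ha, ?_⟩
      rw [zeroVisits_concat, hb]
      simp_all

lemma exists_split_at_first_zero {l : List ℤ} (hl : 0 < zeroVisits l) :
    ∃ a b, l = a ++ b ∧ a.sum = 0 ∧ zeroVisits a = 1 := by
  induction l using List.reverseRecOn with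
  | nil => simp at hl
  | append_singleton l z ih =>
    by_cases h : 0 < zeroVisits l
    · obtain ⟨a, b, rfl, ha, ha1⟩ := ih h
      exact ⟨a, b ++ [z], by simp, ha, ha1⟩
    · refine ⟨l ++ [z], [], by simp, ?_⟩
      rw [zeroVisits_concat] at hl ⊢
      split_ifs at hl ⊢ with hs <;> omega

lemma eq_nil_of_zeroVisits_eq_zero {l : List ℤ} (hl : l.sum = 0) (h : zeroVisits l = 0) :
    l = [] := by
  obtain rfl | ⟨l, z, rfl⟩ := List.eq_nil_or_concat' l
  · rfl
  · simp_all [zeroVisits_concat]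

lemma eq_of_append_eq_append_of_zeroVisits_eq_zero {a b a' b' : List ℤ} (h : a ++ b = a' ++ b')
    (ha : a.sum = 0) (ha' : a'.sum = 0) (hb : zeroVisits b = 0) (hb' : zeroVisits b' = 0) :
    a = a' := by
  rcases List.append_eq_append_iff.1 h with ⟨c, rfl, rfl⟩ | ⟨c, rfl, rfl⟩
  · simp only [List.sum_append, ha, zero_add] at ha'
    simp [eq_nil_of_zeroVisits_eq_zero ha' (by rw [zeroVisits_append ha'] at hb; omega)]
  · simp only [List.sum_append, ha', zero_add] at ha
    simp [eq_nil_of_zeroVisits_eq_zero ha (by rw [zeroVisits_append ha] at hb'; omega)]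

lemma eq_of_append_eq_append_of_zeroVisits_eq_one {a b a' b' : List ℤ} (h : a ++ b = a' ++ b')
    (ha : a.sum = 0) (ha' : a'.sum = 0) (ha1 : zeroVisits a = 1) (ha1' : zeroVisits a' = 1) :
    a = a' := by
  rcases List.append_eq_append_iff.1 h with ⟨c, rfl, rfl⟩ | ⟨c, rfl, rfl⟩
  · simp only [List.sum_append, ha, zero_add] at ha'
    simp [eq_nil_of_zeroVisits_eq_zero ha' (by rw [zeroVisits_append ha] at ha1'; omega)]
  · simp only [List.sum_append, ha', zero_add] at ha
    simp [eq_nil_of_zeroVisits_eq_zero ha (by rw [zeroVisits_append ha'] at ha1; omega)]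

def walksTo (x : ℤ) (ℓ n : ℕ) : Set (List ℤ) :=
  {l | l.length = n ∧ l.sum = x ∧ zeroVisits l = ℓ}

lemma walksTo_eq_biUnion_image2_append {x : ℤ} {ℓ : ℕ} (hℓ : 1 ≤ ℓ) (n : ℕ) :
    walksTo x ℓ n =
      ⋃ m ∈ Finset.Icc 1 n, Set.image2 (· ++ ·) (walksTo 0 ℓ m) (walksTo x 0 (n - m)) := by
  ext l
  simp only [Set.mem_iUnion, Set.mem_image2, exists_prop, Finset.mem_Icc]
  constructor
  · rintro ⟨rfl, hsum, hvis⟩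
    obtain ⟨a, b, rfl, ha, hb⟩ := exists_split_at_last_zero l
    rw [zeroVisits_append ha, hb, add_zero] at hvis
    have ha_ne : a ≠ [] := by rintro rfl; simp at hvis; omega
    exact ⟨a.length, ⟨List.length_pos_iff.2 ha_ne, by simp⟩, a, ⟨rfl, ha, hvis⟩, b,
      ⟨by simp, by simpa [ha] using hsum, hb⟩, rfl⟩
  · rintro ⟨m, hm, a, ⟨ha_len, ha, hva⟩, b, ⟨hb_len, hb, hvb⟩, rfl⟩
    exact ⟨by simp; omega, by simp [ha, hb], by rw [zeroVisits_append ha, hva, hvb, add_zero]⟩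

lemma pairwiseDisjoint_image2_append_walksTo (x : ℤ) (ℓ n : ℕ) (s : Set ℕ) :
    s.PairwiseDisjoint fun m => Set.image2 (· ++ ·) (walksTo 0 ℓ m) (walksTo x 0 (n - m)) := by
  intro m _ m' _ hne
  refine Set.disjoint_left.2 ?_
  rintro _ ⟨a, ⟨rfl, ha, -⟩, b, ⟨-, -, hb⟩, rfl⟩ ⟨a', ⟨rfl, ha', -⟩, b', ⟨-, -, hb'⟩, h⟩
  exact hne (by rw [eq_of_append_eq_append_of_zeroVisits_eq_zero h.symm ha ha' hb hb'])

lemma walksTo_zero_succ_eq_biUnion_image2_append (ℓ m : ℕ) :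
    walksTo 0 (ℓ + 1) m =
      ⋃ j ∈ Finset.range (m + 1), Set.image2 (· ++ ·) (walksTo 0 1 j) (walksTo 0 ℓ (m - j)) := by
  ext l
  simp only [Set.mem_iUnion, Set.mem_image2, exists_prop, Finset.mem_range]
  constructor
  · rintro ⟨rfl, hsum, hvis⟩
    obtain ⟨a, b, rfl, ha, ha1⟩ := exists_split_at_first_zero (l := l) (by omega)
    rw [zeroVisits_append ha, ha1, add_comm, Nat.add_right_cancel_iff] at hvis
    exact ⟨a.length, by simp, a, ⟨rfl, ha, ha1⟩, b,
      ⟨by simp, by simpa [ha] using hsum, hvis⟩, rfl⟩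
  · rintro ⟨j, hj, a, ⟨ha_len, ha, hva⟩, b, ⟨hb_len, hb, hvb⟩, rfl⟩
    exact ⟨by simp; omega, by simp [ha, hb], by rw [zeroVisits_append ha, hva, hvb, add_comm]⟩

lemma pairwiseDisjoint_image2_append_walksTo_zero_one (ℓ m : ℕ) (s : Set ℕ) :
    s.PairwiseDisjoint fun j => Set.image2 (· ++ ·) (walksTo 0 1 j) (walksTo 0 ℓ (m - j)) := by
  intro j _ j' _ hne
  refine Set.disjoint_left.2 ?_
  rintro _ ⟨a, ⟨rfl, ha, ha1⟩, b, -, rfl⟩ ⟨a', ⟨rfl, ha', ha1'⟩, b', -, h⟩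
  exact hne (by rw [eq_of_append_eq_append_of_zeroVisits_eq_one h.symm ha ha' ha1 ha1'])

def firstPassage (x : ℤ) (u : ℕ) : Set (List ℤ) :=
  {l | l.length = u ∧ 1 ≤ u ∧ l.sum = x ∧ ∀ k, 1 ≤ k → k < u → (l.take k).sum ≠ x}

lemma firstPassage_zero (u : ℕ) : firstPassage 0 u = walksTo 0 1 u := by
  ext l
  obtain rfl | ⟨l, z, rfl⟩ := List.eq_nil_or_concat' l
  · simp only [firstPassage, walksTo, Set.mem_ofPred_eq]
    grind [zeroVisits_nil]
  · simp only [firstPassage, walksTo, Set.mem_ofPred_eq, zeroVisits_concat, List.length_append,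
      List.length_singleton]
    refine and_congr_right fun hu => ?_
    subst hu
    have htake : ∀ k ≤ l.length, ((l ++ [z]).take k).sum = (l.take k).sum := fun k hk => by
      rw [List.take_append_of_le_length hk]
    constructor
    · rintro ⟨-, hs, hk⟩
      suffices zeroVisits l = 0 by simp [hs, this]
      refine zeroVisits_eq_zero_iff.2 fun k hk' => ?_
      rw [Finset.mem_Icc] at hk'
      rw [← htake k hk'.2]
      exact hk k hk'.1 (by omega)
    · rintro ⟨hs, hv⟩
      rw [if_pos hs, Nat.add_eq_right, zeroVisits_eq_zero_iff] at hv
      refine ⟨by omega, hs, fun k hk1 hk2 => ?_⟩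
      rw [htake k (by omega)]
      exact hv k (Finset.mem_Icc.2 ⟨hk1, by omega⟩)

lemma sum_take_reverse (l : List ℤ) (k : ℕ) :
    (l.reverse.take k).sum = l.sum - (l.take (l.length - k)).sum := by
  rw [List.take_reverse, List.sum_reverse, ← List.sum_take_add_sum_drop l (l.length - k)]
  ring

lemma reverse_mem_firstPassage_iff {x : ℤ} (hx : x ≠ 0) {u : ℕ} {l : List ℤ} :
    l.reverse ∈ firstPassage x u ↔ l ∈ walksTo x 0 u := by
  simp only [firstPassage, walksTo, Set.mem_ofPred_eq, List.length_reverse, List.sum_reverse,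
    zeroVisits_eq_zero_iff, Finset.mem_Icc, sum_take_reverse]
  constructor
  · rintro ⟨rfl, -, rfl, hk⟩
    refine ⟨rfl, rfl, fun k ⟨hk1, hku⟩ hk0 => ?_⟩
    rcases hku.lt_or_eq with hku | rfl
    · exact hk (l.length - k) (by omega) (by omega) (by rw [Nat.sub_sub_self hku.le, hk0, sub_zero])
    · exact hx (by rwa [List.take_length] at hk0)
  · rintro ⟨rfl, rfl, hk⟩
    have hlen : 1 ≤ l.length := List.length_pos_iff.2 (by rintro rfl; exact hx rfl)
    refine ⟨rfl, hlen, rfl, fun k hk1 hku h => hk (l.length - k) ⟨by omega, by omega⟩ ?_⟩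
    linarith

lemma image_reverse_walksTo {x : ℤ} (hx : x ≠ 0) (u : ℕ) :
    List.reverse '' walksTo x 0 u = firstPassage x u := by
  ext l
  rw [Set.image_eq_preimage_of_inverse List.reverse_involutive.leftInverse
    List.reverse_involutive.rightInverse, Set.mem_preimage, ← reverse_mem_firstPassage_iff hx,
    List.reverse_reverse]

def sumsTo (ℓ m : ℕ) : Set (List ℕ∞) :=
  {t | t.length = ℓ ∧ t.sum = m}

lemma sumsTo_one (m : ℕ) : sumsTo 1 m = {[(m : ℕ∞)]} := by
  ext t
  constructor
  · rintro ⟨ht, hsum⟩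
    obtain ⟨s, rfl⟩ := List.length_eq_one_iff.1 ht
    simpa using hsum
  · rintro rfl
    exact ⟨rfl, by simp⟩

lemma sumsTo_succ_eq_biUnion_image2_append (ℓ m : ℕ) :
    sumsTo (ℓ + 1) m =
      ⋃ j ∈ Finset.range (m + 1), Set.image2 (· ++ ·) {[(j : ℕ∞)]} (sumsTo ℓ (m - j)) := by
  ext t
  simp only [Set.mem_iUnion, Set.image2_singleton_left, Set.mem_image, Finset.mem_range,
    exists_prop, sumsTo, Set.mem_ofPred_eq]
  constructor
  · rintro ⟨ht, hsum⟩
    obtain ⟨s, t, rfl⟩ := List.exists_cons_of_length_eq_add_one ht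
    rw [List.sum_cons] at hsum
    obtain ⟨j, rfl⟩ := ENat.ne_top_iff_exists.1 (show s ≠ ⊤ by rintro rfl; simp at hsum)
    obtain ⟨k, hk⟩ := ENat.ne_top_iff_exists.1 (show t.sum ≠ ⊤ by intro h; simp [h] at hsum)
    rw [← hk] at hsum
    have hjk : j + k = m := by exact_mod_cast hsum
    exact ⟨j, by omega, t, ⟨by simpa using ht, by rw [← hk]; congr; omega⟩, rfl⟩
  · rintro ⟨j, hj, t, ⟨rfl, ht⟩, rfl⟩
    refine ⟨by simp, ?_⟩
    simp only [List.singleton_append, List.sum_cons, ht]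
    norm_cast
    omega

lemma pairwiseDisjoint_image2_append_sumsTo (ℓ m : ℕ) (s : Set ℕ) :
    s.PairwiseDisjoint fun j => Set.image2 (· ++ ·) {[(j : ℕ∞)]} (sumsTo ℓ (m - j)) := by
  intro j _ j' _ hne
  refine Set.disjoint_left.2 ?_
  rintro _ ⟨_, rfl, b, -, rfl⟩ ⟨_, rfl, b', -, h⟩
  simp at h
  exact hne h.1.symm

lemma listWeight_sumsTo_eq_listWeight_walksTo (p : ℤ → ℝ≥0∞) (q : ℕ∞ → ℝ≥0∞)
    (hq : ∀ j : ℕ, q j = listWeight p (walksTo 0 1 j)) {ℓ : ℕ} (hℓ : 1 ≤ ℓ) (m : ℕ) :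
    listWeight q (sumsTo ℓ m) = listWeight p (walksTo 0 ℓ m) := by
  induction ℓ, hℓ using Nat.le_induction generalizing m with
  | base => simp [sumsTo_one, listWeight_singleton, hq]
  | succ ℓ hℓ ih =>
    rw [sumsTo_succ_eq_biUnion_image2_append, walksTo_zero_succ_eq_biUnion_image2_append,
      listWeight_biUnion_finset q (pairwiseDisjoint_image2_append_sumsTo ℓ m _),
      listWeight_biUnion_finset p (pairwiseDisjoint_image2_append_walksTo_zero_one ℓ m _)]
    refine Finset.sum_congr rfl fun j _ => ?_
    rw [listWeight_image2_append q (k := 1) (by simp), listWeight_singleton,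
      listWeight_image2_append p fun a ha => ha.1, ih]
    simp [hq]

theorem listWeight_walksTo_eq_sum (p : ℤ → ℝ≥0∞) (q : ℕ∞ → ℝ≥0∞)
    (hq : ∀ j : ℕ, q j = listWeight p (walksTo 0 1 j)) {x : ℤ} (hx : x ≠ 0) {ℓ : ℕ}
    (hℓ : 1 ≤ ℓ) (n : ℕ) :
    listWeight p (walksTo x ℓ n) =
      ∑ m ∈ Finset.Icc 1 n, listWeight q (sumsTo ℓ m) * listWeight p (firstPassage x (n - m)) := by
  rw [walksTo_eq_biUnion_image2_append hℓ,
    listWeight_biUnion_finset p (pairwiseDisjoint_image2_append_walksTo x ℓ n _)]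
  refine Finset.sum_congr rfl fun m _ => ?_
  rw [listWeight_image2_append p fun a ha => ha.1,
    listWeight_sumsTo_eq_listWeight_walksTo p q hq hℓ, ← image_reverse_walksTo hx,
    listWeight_image_reverse]

section Events

variable {Ω : Type*}

lemma S_eq_sum_trajectory (X : ℕ → Ω → ℤ) (n : ℕ) (ω : Ω) :
    S X n ω = (trajectory X n ω).sum :=
  (sum_trajectory X n ω).symm

lemma Om_eq_sum_trajectory (w : ℕ → Ω → ℕ∞) (ℓ : ℕ) (ω : Ω) :
    Om w ℓ ω = (trajectory w ℓ ω).sum :=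
  (sum_trajectory w ℓ ω).symm

lemma occ_zero_eq_zeroVisits (X : ℕ → Ω → ℤ) (n : ℕ) (ω : Ω) :
    occ X 0 n ω = zeroVisits (trajectory X n ω) := by
  rw [occ, zeroVisits, length_trajectory]
  congr 1
  refine Finset.filter_congr fun k hk => ?_
  rw [S_eq_sum_trajectory, take_trajectory X (Finset.mem_Icc.1 hk).2]

lemma sInf_natCast_image_eq_iff {P : Set ℕ} {u : ℕ} :
    sInf (((↑) : ℕ → ℕ∞) '' P) = u ↔ IsLeast P u := by
  rcases P.eq_empty_or_nonempty with rfl | hP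
  · simp [IsLeast]
  · rw [sInf_image, ← ENat.natCast_sInf hP, Nat.cast_inj]
    exact ⟨fun h => h ▸ isLeast_csInf hP, IsLeast.csInf_eq⟩

lemma tau_eq_natCast_iff (X : ℕ → Ω → ℤ) (a : ℤ) (u : ℕ) (ω : Ω) :
    tau X a ω = u ↔ trajectory X u ω ∈ firstPassage a u := by
  have hT : {n : ℕ∞ | ∃ m : ℕ, n = m ∧ 1 ≤ m ∧ S X m ω = a} =
      (↑) '' {m : ℕ | 1 ≤ m ∧ S X m ω = a} := by
    ext
    simp only [Set.mem_ofPred_eq, Set.mem_image]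
    exact ⟨fun ⟨m, h, hm⟩ => ⟨m, hm, h.symm⟩, fun ⟨m, hm, h⟩ => ⟨m, h.symm, hm⟩⟩
  rw [tau, hT, sInf_natCast_image_eq_iff]
  simp only [IsLeast, lowerBounds, firstPassage, Set.mem_ofPred_eq, length_trajectory, true_and,
    ← S_eq_sum_trajectory]
  constructor
  · rintro ⟨⟨h1, ha⟩, hmin⟩
    refine ⟨h1, ha, fun k hk1 hku hk => ?_⟩
    rw [take_trajectory X hku.le, ← S_eq_sum_trajectory] at hk
    exact absurd (hmin ⟨hk1, hk⟩) (by omega)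
  · rintro ⟨h1, ha, hk⟩
    refine ⟨⟨h1, ha⟩, fun m ⟨hm1, hm⟩ => ?_⟩
    by_contra! hlt
    exact hk m hm1 hlt (by rw [take_trajectory X hlt.le, ← S_eq_sum_trajectory, hm])

end Events

theorem joint_occ_zero_eq_sum_Om_mul_tau_general {Ω : Type*} [MeasureSpace Ω]
    (X : ℕ → Ω → ℤ)
    (hindep : iIndepFun X ℙ)
    (hident : ∀ i, IdentDistrib (X i) (X 1) ℙ ℙ)
    (w : ℕ → Ω → ℕ∞)
    (hw_indep : iIndepFun w ℙ)
    (hw_ident : ∀ i, IdentDistrib (w i) (tau X 0) ℙ ℙ)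
    (x : ℤ) (hx : x ≠ 0) (n ℓ : ℕ) (hℓ : 1 ≤ ℓ) :
    ℙ {ω | S X n ω = x ∧ occ X 0 n ω = ℓ} =
      ∑ m ∈ Finset.Icc 1 n,
        ℙ {ω | Om w ℓ ω = (m : ℕ∞)} * ℙ {ω | tau X x ω = ((n - m : ℕ) : ℕ∞)} := by
  have htau : ∀ (a : ℤ) (u : ℕ), ℙ {ω | tau X a ω = u} =
      listWeight (fun z => ℙ (X 1 ⁻¹' {z})) (firstPassage a u) := fun a u => by
    simp only [tau_eq_natCast_iff]
    exact measure_trajectory_mem hindep hident fun l hl => hl.1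
  have hjoint : {ω | S X n ω = x ∧ occ X 0 n ω = ℓ} = {ω | trajectory X n ω ∈ walksTo x ℓ n} := by
    ext ω
    simp [walksTo, S_eq_sum_trajectory, occ_zero_eq_zeroVisits]
  have hOm : ∀ m : ℕ, {ω | Om w ℓ ω = m} = {ω | trajectory w ℓ ω ∈ sumsTo ℓ m} := fun m => by
    ext ω
    simp [sumsTo, Om_eq_sum_trajectory]
  rw [hjoint, measure_trajectory_mem hindep hident fun l hl => hl.1,
    listWeight_walksTo_eq_sum _ (fun z => ℙ (tau X 0 ⁻¹' {z})) (fun j => by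
      rw [← firstPassage_zero]; exact htau 0 j) hx hℓ]
  refine Finset.sum_congr rfl fun m _ => ?_
  rw [hOm, measure_trajectory_mem hw_indep hw_ident fun t ht => ht.1, htau]

/-- Joint decomposition at the last visit to `0`, for `x ≠ 0`:
`ℙ[S_n = x, Λ⁰_n = ℓ] = Σ_{m=1}^n ℙ[Ω_ℓ = m] ℙ[τ_x = n − m]`. -/
theorem joint_occ_zero_eq_sum_Om_mul_tau {Ω : Type*} [MeasureSpace Ω]
    [IsProbabilityMeasure (ℙ : Measure Ω)] (X : ℕ → Ω → ℤ)
    (hmeas : ∀ i, Measurable (X i))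
    (hindep : iIndepFun X ℙ)
    (hident : ∀ i, IdentDistrib (X i) (X 1) ℙ ℙ)
    (w : ℕ → Ω → ℕ∞)
    (hw_indep : iIndepFun w ℙ)
    (hw_ident : ∀ i, IdentDistrib (w i) (tau X 0) ℙ ℙ)
    (x : ℤ) (hx : x ≠ 0) (n ℓ : ℕ) (hℓ : 1 ≤ ℓ) :
    ℙ {ω | S X n ω = x ∧ occ X 0 n ω = ℓ} =
      ∑ m ∈ Finset.Icc 1 n,
        ℙ {ω | Om w ℓ ω = (m : ℕ∞)} * ℙ {ω | tau X x ω = ((n - m : ℕ) : ℕ∞)} :=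
  joint_occ_zero_eq_sum_Om_mul_tau_general X hindep hident w hw_indep hw_ident x hx n ℓ hℓ
end
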